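/- arXiv:2411.15990 — 4 statements merged into one kernel-verified Lean document; each statement's English description precedes it below -/
import Mathlib

section
/- Energy conservation of the BGK collision operator: under the same hypotheses, ∫ ‖v‖² (M(f)(v) - f(v)) dv = 0. -/
open MeasureTheory Real
open scoped RealInnerProductSpace

lemma aux_sq_int1d {b : ℝ} (hb : 0 < b) :
    Integrable (fun t : ℝ => t ^ 2 * Real.exp (-b * t ^ 2)) := by
  have h := integrable_rpow_mul_exp_neg_mul_sq hb (show (-1:ℝ) < 2 by norm_num)
  have h2 : ∀ t : ℝ, t ^ (2:ℝ) = t ^ 2 := fun t => by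
    rw [show (2:ℝ) = ((2:ℕ):ℝ) by norm_num, Real.rpow_natCast]
  simpa [h2] using h

lemma aux_sq_gauss1d {b : ℝ} (hb : 0 < b) :
    ∫ x : ℝ, x ^ 2 * Real.exp (-b * x ^ 2) = (2 * b)⁻¹ * Real.sqrt (π / b) := by
  have h1 : ∫ x : ℝ, x ^ 2 * Real.exp (-b * x ^ 2)
      = 2 * ∫ x in Set.Ioi (0:ℝ), x ^ 2 * Real.exp (-b * x ^ 2) := by
    rw [← integral_comp_abs (f := fun x => x ^ 2 * Real.exp (-b * x ^ 2))]
    congr 1; funext x; rw [sq_abs]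
  have h2 : ∫ x in Set.Ioi (0:ℝ), x ^ 2 * Real.exp (-b * x ^ 2)
      = ∫ x in Set.Ioi (0:ℝ), x ^ (2:ℝ) * Real.exp (-b * x ^ (2:ℝ)) := by
    congr 1; funext x
    rw [show (2:ℝ) = ((2:ℕ):ℝ) by norm_num, Real.rpow_natCast]
  rw [h1, h2, integral_rpow_mul_exp_neg_mul_rpow two_pos (by norm_num) hb]
  have h3 : Real.Gamma (((2:ℝ) + 1) / 2) = Real.sqrt π / 2 := by
    rw [show ((2:ℝ)+1)/2 = 1/2 + 1 by norm_num, Real.Gamma_add_one (by norm_num),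
      Real.Gamma_one_half_eq]
    ring
  have h4 : b ^ (-((2:ℝ) + 1) / 2) = b⁻¹ * (Real.sqrt b)⁻¹ := by
    rw [show (-((2:ℝ)+1)/2) = (-1) + -(1/2) by norm_num, Real.rpow_add hb,
      Real.rpow_neg_one, Real.rpow_neg hb.le, ← Real.sqrt_eq_rpow]
  have h5 : Real.sqrt (π / b) = Real.sqrt π / Real.sqrt b := Real.sqrt_div pi_pos.le b
  have hsb : Real.sqrt b ≠ 0 := (Real.sqrt_pos.mpr hb).ne'
  rw [h3, h4, h5]
  field_simp

lemma aux_norm_symm (d : ℕ) (x : Fin d → ℝ) :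
    ‖(MeasurableEquiv.toLp 2 (Fin d → ℝ)) x‖ ^ 2 = ∑ i, x i ^ 2 := by
  simp only [MeasurableEquiv.toLp_apply,
    EuclideanSpace.norm_eq, PiLp.toLp_apply, Real.norm_eq_abs, sq_abs]
  exact Real.sq_sqrt (Finset.sum_nonneg fun i _ => sq_nonneg _)

lemma aux_integrable_transfer {d : ℕ} {F : EuclideanSpace ℝ (Fin d) → ℝ}
    (h : Integrable (fun x : Fin d → ℝ => F ((MeasurableEquiv.toLp 2 (Fin d → ℝ)) x))) :
    Integrable F := by
  have e := (EuclideanSpace.volume_preserving_symm_measurableEquiv_toLp (Fin d)).symm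
  rw [← e.integrable_comp_emb (MeasurableEquiv.measurableEmbedding _)]
  exact h

lemma aux_integral_transfer {d : ℕ} (F : EuclideanSpace ℝ (Fin d) → ℝ) :
    ∫ x : Fin d → ℝ, F ((MeasurableEquiv.toLp 2 (Fin d → ℝ)) x) = ∫ v, F v := by
  have e := (EuclideanSpace.volume_preserving_symm_measurableEquiv_toLp (Fin d)).symm
  exact e.integral_comp (MeasurableEquiv.measurableEmbedding _) F

lemma aux_E0_int {d : ℕ} {b : ℝ} (hb : 0 < b) :
    Integrable (fun v : EuclideanSpace ℝ (Fin d) => Real.exp (-b * ‖v‖ ^ 2)) := by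
  apply aux_integrable_transfer
  have heq : (fun x : Fin d → ℝ =>
      Real.exp (-b * ‖(MeasurableEquiv.toLp 2 (Fin d → ℝ)) x‖ ^ 2))
      = fun x => ∏ i, Real.exp (-b * x i ^ 2) := by
    funext x
    rw [aux_norm_symm, ← Real.exp_sum, Finset.mul_sum]
  rw [heq]
  exact Integrable.fintype_prod (fun i => integrable_exp_neg_mul_sq hb)

lemma aux_E0_val {d : ℕ} {b : ℝ} (hb : 0 < b) :
    ∫ v : EuclideanSpace ℝ (Fin d), Real.exp (-b * ‖v‖ ^ 2) = (π / b) ^ ((d:ℝ)/2) := by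
  have h := GaussianFourier.integral_rexp_neg_mul_sq_norm (V := EuclideanSpace ℝ (Fin d)) hb
  simpa [finrank_euclideanSpace_fin] using h

lemma aux_g_int {b : ℝ} (hb : 0 < b) (P : Prop) [Decidable P] :
    Integrable (fun t : ℝ => (if P then t ^ 2 else 1) * Real.exp (-b * t ^ 2)) := by
  by_cases h : P
  · simpa [h] using aux_sq_int1d hb
  · simpa [h] using integrable_exp_neg_mul_sq hb

lemma aux_pt {d : ℕ} (b : ℝ) (x : Fin d → ℝ) :
    (∑ i, x i ^ 2) * Real.exp (-b * ∑ j, x j ^ 2)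
      = ∑ i, ∏ j, ((if j = i then x j ^ 2 else 1) * Real.exp (-b * x j ^ 2)) := by
  rw [Finset.sum_mul]
  refine Finset.sum_congr rfl fun i _ => ?_
  rw [Finset.prod_mul_distrib, Finset.prod_ite_eq', if_pos (Finset.mem_univ i),
    ← Real.exp_sum, ← Finset.mul_sum]

lemma aux_E2_pi_int {d : ℕ} {b : ℝ} (hb : 0 < b) :
    Integrable (fun x : Fin d → ℝ => (∑ i, x i ^ 2) * Real.exp (-b * ∑ j, x j ^ 2)) := by
  have heq : (fun x : Fin d → ℝ => (∑ i, x i ^ 2) * Real.exp (-b * ∑ j, x j ^ 2))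
      = fun x => ∑ i, ∏ j, ((if j = i then x j ^ 2 else 1) * Real.exp (-b * x j ^ 2)) := by
    funext x; exact aux_pt b x
  rw [heq]
  exact integrable_finset_sum _ fun i _ =>
    Integrable.fintype_prod (f := fun j t => (if j = i then t ^ 2 else 1) * Real.exp (-b * t ^ 2))
      (fun j => aux_g_int hb _)

lemma aux_E2_pi_val {d : ℕ} {b : ℝ} (hb : 0 < b) :
    ∫ x : Fin d → ℝ, (∑ i, x i ^ 2) * Real.exp (-b * ∑ j, x j ^ 2)
      = d * (((2 * b)⁻¹ * Real.sqrt (π / b)) * Real.sqrt (π / b) ^ (d - 1)) := by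
  have heq : (fun x : Fin d → ℝ => (∑ i, x i ^ 2) * Real.exp (-b * ∑ j, x j ^ 2))
      = fun x => ∑ i, ∏ j, ((if j = i then x j ^ 2 else 1) * Real.exp (-b * x j ^ 2)) := by
    funext x; exact aux_pt b x
  rw [heq, integral_finset_sum (μ := volume) _ (fun i _ =>
    Integrable.fintype_prod (f := fun j t => (if j = i then t ^ 2 else 1) * Real.exp (-b * t ^ 2))
      (fun j => aux_g_int hb _))]
  have hterm : ∀ i : Fin d,
      (∫ x : Fin d → ℝ, ∏ j, ((if j = i then x j ^ 2 else 1) * Real.exp (-b * x j ^ 2)))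
      = ((2 * b)⁻¹ * Real.sqrt (π / b)) * Real.sqrt (π / b) ^ (d - 1) := by
    intro i
    rw [integral_fintype_prod_volume_eq_prod (ι := Fin d)
      (fun j (t : ℝ) => (if j = i then t ^ 2 else 1) * Real.exp (-b * t ^ 2))]
    have hval : ∀ j : Fin d, (∫ t : ℝ, (if j = i then t ^ 2 else 1) * Real.exp (-b * t ^ 2))
        = if j = i then (2 * b)⁻¹ * Real.sqrt (π / b) else Real.sqrt (π / b) := by
      intro j
      by_cases h : j = i
      · simp only [h, if_true]
        exact aux_sq_gauss1d hb
      · simp only [h, if_false, one_mul]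
        exact integral_gaussian b
    simp_rw [hval]
    rw [← Finset.mul_prod_erase Finset.univ _ (Finset.mem_univ i), if_pos rfl]
    congr 1
    rw [Finset.prod_congr rfl (fun j hj => if_neg (Finset.ne_of_mem_erase hj)),
      Finset.prod_const, Finset.card_erase_of_mem (Finset.mem_univ i), Finset.card_univ,
      Fintype.card_fin]
  simp_rw [hterm]
  rw [Finset.sum_const, Finset.card_univ, Fintype.card_fin, nsmul_eq_mul]

lemma aux_E2_int {d : ℕ} {b : ℝ} (hb : 0 < b) :
    Integrable (fun v : EuclideanSpace ℝ (Fin d) => ‖v‖ ^ 2 * Real.exp (-b * ‖v‖ ^ 2)) := by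
  apply aux_integrable_transfer
  have heq : (fun x : Fin d → ℝ =>
      ‖(MeasurableEquiv.toLp 2 (Fin d → ℝ)) x‖ ^ 2
        * Real.exp (-b * ‖(MeasurableEquiv.toLp 2 (Fin d → ℝ)) x‖ ^ 2))
      = fun x => (∑ i, x i ^ 2) * Real.exp (-b * ∑ j, x j ^ 2) := by
    funext x; rw [aux_norm_symm]
  rw [heq]
  exact aux_E2_pi_int hb

lemma aux_E2_val {d : ℕ} (hd : 1 ≤ d) {b : ℝ} (hb : 0 < b) :
    ∫ v : EuclideanSpace ℝ (Fin d), ‖v‖ ^ 2 * Real.exp (-b * ‖v‖ ^ 2)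
      = (d / (2 * b)) * (π / b) ^ ((d:ℝ)/2) := by
  rw [← aux_integral_transfer (fun v => ‖v‖ ^ 2 * Real.exp (-b * ‖v‖ ^ 2))]
  have heq : (fun x : Fin d → ℝ =>
      ‖(MeasurableEquiv.toLp 2 (Fin d → ℝ)) x‖ ^ 2
        * Real.exp (-b * ‖(MeasurableEquiv.toLp 2 (Fin d → ℝ)) x‖ ^ 2))
      = fun x => (∑ i, x i ^ 2) * Real.exp (-b * ∑ j, x j ^ 2) := by
    funext x; rw [aux_norm_symm]
  rw [show (∫ x : Fin d → ℝ, ‖(MeasurableEquiv.toLp 2 (Fin d → ℝ)) x‖ ^ 2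
        * Real.exp (-b * ‖(MeasurableEquiv.toLp 2 (Fin d → ℝ)) x‖ ^ 2))
      = ∫ x : Fin d → ℝ, (∑ i, x i ^ 2) * Real.exp (-b * ∑ j, x j ^ 2) by rw [heq],
    aux_E2_pi_val hb]
  have hπb : (0:ℝ) < π / b := div_pos pi_pos hb
  have hpow : Real.sqrt (π / b) * Real.sqrt (π / b) ^ (d - 1) = (π / b) ^ ((d:ℝ)/2) := by
    rw [← pow_succ', Nat.sub_add_cancel hd, Real.sqrt_eq_rpow,
      ← Real.rpow_natCast ((π / b) ^ (1/(2:ℝ))) d, ← Real.rpow_mul hπb.le]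
    congr 1
    ring
  rw [mul_assoc, hpow]
  ring

lemma aux_E1_int {d : ℕ} {b : ℝ} (hb : 0 < b) :
    Integrable (fun v : EuclideanSpace ℝ (Fin d) => Real.exp (-b * ‖v‖ ^ 2) • v) := by
  refine ((aux_E0_int hb).add (aux_E2_int hb)).mono' ?_
    (Filter.Eventually.of_forall fun v => ?_)
  · exact ((Real.continuous_exp.comp
      ((continuous_const.mul ((continuous_norm).pow 2)))).smul continuous_id).aestronglyMeasurable
  · rw [norm_smul, Real.norm_eq_abs, Real.abs_exp]
    have h1 : ‖v‖ ≤ 1 + ‖v‖ ^ 2 := by nlinarith [sq_nonneg (‖v‖ - 1), norm_nonneg v]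
    have h2 : (0:ℝ) < Real.exp (-b * ‖v‖ ^ 2) := Real.exp_pos _
    show Real.exp (-b * ‖v‖ ^ 2) * ‖v‖ ≤
      Real.exp (-b * ‖v‖ ^ 2) + ‖v‖ ^ 2 * Real.exp (-b * ‖v‖ ^ 2)
    nlinarith

lemma aux_E1_val {d : ℕ} (b : ℝ) :
    ∫ v : EuclideanSpace ℝ (Fin d), Real.exp (-b * ‖v‖ ^ 2) • v = 0 := by
  have h := integral_neg_eq_self
    (fun v : EuclideanSpace ℝ (Fin d) => Real.exp (-b * ‖v‖ ^ 2) • v) volume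
  simp only [norm_neg, smul_neg] at h
  rw [integral_neg] at h
  have h2 : (2:ℝ) • ∫ v : EuclideanSpace ℝ (Fin d), Real.exp (-b * ‖v‖ ^ 2) • v = 0 := by
    rw [two_smul]
    nth_rewrite 1 [← h]
    exact neg_add_cancel _
  rcases smul_eq_zero.mp h2 with h3 | h3
  · norm_num at h3
  · exact h3

lemma aux_shift_int {d : ℕ} {b : ℝ} (hb : 0 < b) (u : EuclideanSpace ℝ (Fin d)) :
    Integrable (fun w : EuclideanSpace ℝ (Fin d) => ‖w + u‖ ^ 2 * Real.exp (-b * ‖w‖ ^ 2)) := by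
  refine (((aux_E2_int hb).const_mul 2).add ((aux_E0_int hb).const_mul (2 * ‖u‖ ^ 2))).mono' ?_
    (Filter.Eventually.of_forall fun w => ?_)
  · exact (((continuous_id.add continuous_const).norm.pow 2).mul
      (Real.continuous_exp.comp (continuous_const.mul (continuous_norm.pow 2)))).aestronglyMeasurable
  · rw [Real.norm_eq_abs, abs_mul, abs_of_nonneg (sq_nonneg _), Real.abs_exp]
    show ‖w + u‖ ^ 2 * Real.exp (-b * ‖w‖ ^ 2) ≤
      2 * (‖w‖ ^ 2 * Real.exp (-b * ‖w‖ ^ 2)) + 2 * ‖u‖ ^ 2 * Real.exp (-b * ‖w‖ ^ 2)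
    have h1 : ‖w + u‖ ^ 2 ≤ 2 * ‖w‖ ^ 2 + 2 * ‖u‖ ^ 2 := by
      have := norm_add_le w u
      nlinarith [norm_nonneg w, norm_nonneg u, norm_nonneg (w + u), sq_nonneg (‖w‖ - ‖u‖)]
    nlinarith [Real.exp_pos (-b * ‖w‖ ^ 2)]

lemma aux_M2_int {d : ℕ} {b : ℝ} (hb : 0 < b) (u : EuclideanSpace ℝ (Fin d)) :
    Integrable (fun v : EuclideanSpace ℝ (Fin d) => ‖v‖ ^ 2 * Real.exp (-b * ‖v - u‖ ^ 2)) := by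
  have h := (aux_shift_int hb u).comp_sub_right u
  simpa using h

lemma aux_M2_val {d : ℕ} (hd : 1 ≤ d) {b : ℝ} (hb : 0 < b) (u : EuclideanSpace ℝ (Fin d)) :
    ∫ v : EuclideanSpace ℝ (Fin d), ‖v‖ ^ 2 * Real.exp (-b * ‖v - u‖ ^ 2)
      = ((d : ℝ) / (2 * b) + ‖u‖ ^ 2) * (π / b) ^ ((d:ℝ)/2) := by
  have hstep : (∫ v : EuclideanSpace ℝ (Fin d), ‖v‖ ^ 2 * Real.exp (-b * ‖v - u‖ ^ 2))
      = ∫ w : EuclideanSpace ℝ (Fin d), ‖w + u‖ ^ 2 * Real.exp (-b * ‖w‖ ^ 2) := by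
    rw [← integral_sub_right_eq_self
      (fun w : EuclideanSpace ℝ (Fin d) => ‖w + u‖ ^ 2 * Real.exp (-b * ‖w‖ ^ 2)) u]
    congr 1; funext v; rw [sub_add_cancel]
  have hI1 : Integrable (fun w : EuclideanSpace ℝ (Fin d) => ⟪u, w⟫ * Real.exp (-b * ‖w‖ ^ 2)) := by
    have h := (innerSL ℝ u).integrable_comp (aux_E1_int hb)
    have heq : (fun w : EuclideanSpace ℝ (Fin d) => (innerSL ℝ u) (Real.exp (-b * ‖w‖ ^ 2) • w))
        = fun w => ⟪u, w⟫ * Real.exp (-b * ‖w‖ ^ 2) := by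
      funext w
      simp only [innerSL_apply_apply, real_inner_smul_right]
      ring
    rwa [heq] at h
  have hz : ∫ w : EuclideanSpace ℝ (Fin d), ⟪u, w⟫ * Real.exp (-b * ‖w‖ ^ 2) = 0 := by
    have h := integral_inner (𝕜 := ℝ) (aux_E1_int hb) u
    rw [aux_E1_val, inner_zero_right] at h
    rw [← h]
    congr 1; funext w; rw [real_inner_smul_right]; ring
  rw [hstep]
  have hsplit : (fun w : EuclideanSpace ℝ (Fin d) => ‖w + u‖ ^ 2 * Real.exp (-b * ‖w‖ ^ 2))
      = fun w => ‖w‖ ^ 2 * Real.exp (-b * ‖w‖ ^ 2)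
          + (2 * (⟪u, w⟫ * Real.exp (-b * ‖w‖ ^ 2))
            + ‖u‖ ^ 2 * Real.exp (-b * ‖w‖ ^ 2)) := by
    funext w
    rw [norm_add_sq_real, real_inner_comm]
    ring
  have eA : (∫ w : EuclideanSpace ℝ (Fin d),
        (‖w‖ ^ 2 * Real.exp (-b * ‖w‖ ^ 2)
          + (2 * (⟪u, w⟫ * Real.exp (-b * ‖w‖ ^ 2)) + ‖u‖ ^ 2 * Real.exp (-b * ‖w‖ ^ 2))))
      = (∫ w : EuclideanSpace ℝ (Fin d), ‖w‖ ^ 2 * Real.exp (-b * ‖w‖ ^ 2))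
        + ∫ w : EuclideanSpace ℝ (Fin d),
            (2 * (⟪u, w⟫ * Real.exp (-b * ‖w‖ ^ 2)) + ‖u‖ ^ 2 * Real.exp (-b * ‖w‖ ^ 2)) :=
    integral_add (aux_E2_int hb) ((hI1.const_mul 2).add ((aux_E0_int hb).const_mul (‖u‖ ^ 2)))
  have eB : (∫ w : EuclideanSpace ℝ (Fin d),
        (2 * (⟪u, w⟫ * Real.exp (-b * ‖w‖ ^ 2)) + ‖u‖ ^ 2 * Real.exp (-b * ‖w‖ ^ 2)))
      = (∫ w : EuclideanSpace ℝ (Fin d), 2 * (⟪u, w⟫ * Real.exp (-b * ‖w‖ ^ 2)))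
        + ∫ w : EuclideanSpace ℝ (Fin d), ‖u‖ ^ 2 * Real.exp (-b * ‖w‖ ^ 2) :=
    integral_add (hI1.const_mul 2) ((aux_E0_int hb).const_mul (‖u‖ ^ 2))
  rw [hsplit, eA, eB, integral_const_mul, integral_const_mul, hz, aux_E0_val hb,
    aux_E2_val hd hb]
  ring

/-- Energy conservation of the BGK collision operator: ∫ ‖v‖² (M(f)(v) - f(v)) dv = 0. -/
theorem bgk_energy_conservation (d : ℕ) (hd : 1 ≤ d)
    (f : EuclideanSpace ℝ (Fin d) → ℝ)
    (hf_nonneg : ∀ v, 0 ≤ f v)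
    (hf_int : Integrable f)
    (hf_mom1 : Integrable (fun v : EuclideanSpace ℝ (Fin d) => f v • v))
    (hf_mom2 : Integrable (fun v : EuclideanSpace ℝ (Fin d) => ‖v‖ ^ 2 * f v))
    (ρf : ℝ) (uf : EuclideanSpace ℝ (Fin d)) (Tf : ℝ)
    (hρ : ρf = ∫ v, f v)
    (hu : uf = ρf⁻¹ • ∫ v, f v • v)
    (hT : Tf = (d * ρf)⁻¹ * ∫ v, ‖v - uf‖ ^ 2 * f v)
    (hρ_pos : 0 < ρf) (hT_pos : 0 < Tf) :
    ∫ v : EuclideanSpace ℝ (Fin d),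
      ‖v‖ ^ 2 *
        (ρf * (2 * π * Tf) ^ (-(d : ℝ) / 2) * Real.exp (-‖v - uf‖ ^ 2 / (2 * Tf)) - f v)
      = 0 := by
  set b : ℝ := (2 * Tf)⁻¹ with hb_def
  have hb : 0 < b := by positivity
  set C : ℝ := ρf * (2 * π * Tf) ^ (-(d : ℝ) / 2) with hC_def
  have hexp : ∀ t : ℝ, -t / (2 * Tf) = -b * t := by
    intro t; rw [hb_def]; ring
  -- the f side
  have hdρ : ((d : ℝ) * ρf) ≠ 0 := by positivity
  have hI : ∫ v : EuclideanSpace ℝ (Fin d), ‖v - uf‖ ^ 2 * f v = d * ρf * Tf := by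
    rw [hT]
    field_simp
  have hfmom1val : ∫ v : EuclideanSpace ℝ (Fin d), f v • v = ρf • uf := by
    rw [hu, smul_smul, mul_inv_cancel₀ hρ_pos.ne', one_smul]
  have hintf1 : Integrable (fun v : EuclideanSpace ℝ (Fin d) => ⟪uf, v⟫ * f v) := by
    have h := (innerSL ℝ uf).integrable_comp hf_mom1
    have heq : (fun v : EuclideanSpace ℝ (Fin d) => (innerSL ℝ uf) (f v • v))
        = fun v => ⟪uf, v⟫ * f v := by
      funext v
      simp only [innerSL_apply_apply, real_inner_smul_right]
      ring
    rwa [heq] at h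
  have hinnerval : ∫ v : EuclideanSpace ℝ (Fin d), ⟪uf, v⟫ * f v = ρf * ‖uf‖ ^ 2 := by
    have h := integral_inner (𝕜 := ℝ) hf_mom1 uf
    rw [hfmom1val, inner_smul_right, real_inner_self_eq_norm_sq] at h
    rw [← h]
    congr 1; funext v; rw [real_inner_smul_right]; ring
  have hsplitf : (fun v : EuclideanSpace ℝ (Fin d) => ‖v - uf‖ ^ 2 * f v)
      = fun v => ‖v‖ ^ 2 * f v - 2 * (⟪uf, v⟫ * f v) + ‖uf‖ ^ 2 * f v := by
    funext v
    rw [norm_sub_sq_real, real_inner_comm]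
    ring
  have eA : (∫ v : EuclideanSpace ℝ (Fin d),
        (‖v‖ ^ 2 * f v - 2 * (⟪uf, v⟫ * f v) + ‖uf‖ ^ 2 * f v))
      = (∫ v : EuclideanSpace ℝ (Fin d), (‖v‖ ^ 2 * f v - 2 * (⟪uf, v⟫ * f v)))
        + ∫ v : EuclideanSpace ℝ (Fin d), ‖uf‖ ^ 2 * f v :=
    integral_add (hf_mom2.sub (hintf1.const_mul 2)) (hf_int.const_mul (‖uf‖ ^ 2))
  have eB : (∫ v : EuclideanSpace ℝ (Fin d), (‖v‖ ^ 2 * f v - 2 * (⟪uf, v⟫ * f v)))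
      = (∫ v : EuclideanSpace ℝ (Fin d), ‖v‖ ^ 2 * f v)
        - ∫ v : EuclideanSpace ℝ (Fin d), 2 * (⟪uf, v⟫ * f v) :=
    integral_sub hf_mom2 (hintf1.const_mul 2)
  have hfval : ∫ v : EuclideanSpace ℝ (Fin d), ‖v‖ ^ 2 * f v
      = d * ρf * Tf + ρf * ‖uf‖ ^ 2 := by
    have h := hI
    rw [hsplitf, eA, eB, integral_const_mul, integral_const_mul, hinnerval, ← hρ] at h
    linarith
  -- the Maxwellian side
  have hMfun : (fun v : EuclideanSpace ℝ (Fin d) =>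
      ‖v‖ ^ 2 * (C * Real.exp (-‖v - uf‖ ^ 2 / (2 * Tf))))
      = fun v => C * (‖v‖ ^ 2 * Real.exp (-b * ‖v - uf‖ ^ 2)) := by
    funext v
    rw [hexp]
    ring
  have hM2_int : Integrable (fun v : EuclideanSpace ℝ (Fin d) =>
      ‖v‖ ^ 2 * (C * Real.exp (-‖v - uf‖ ^ 2 / (2 * Tf)))) := by
    rw [hMfun]
    exact (aux_M2_int hb uf).const_mul C
  have hπb : π / b = 2 * π * Tf := by
    rw [hb_def]
    field_simp
  have hCpow : C * (π / b) ^ ((d:ℝ)/2) = ρf := by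
    rw [hπb, hC_def, mul_assoc, ← Real.rpow_add (by positivity),
      show (-(d:ℝ) / 2 + (d:ℝ) / 2) = 0 by ring, Real.rpow_zero, mul_one]
  have hM2_val : ∫ v : EuclideanSpace ℝ (Fin d),
      ‖v‖ ^ 2 * (C * Real.exp (-‖v - uf‖ ^ 2 / (2 * Tf)))
      = d * ρf * Tf + ρf * ‖uf‖ ^ 2 := by
    rw [hMfun, integral_const_mul, aux_M2_val hd hb uf]
    have hdb : (d : ℝ) / (2 * b) = d * Tf := by
      rw [hb_def]
      field_simp
    rw [hdb, mul_comm ((d:ℝ) * Tf + ‖uf‖ ^ 2) _, ← mul_assoc, hCpow]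
    ring
  -- combine
  have hsplit : (fun v : EuclideanSpace ℝ (Fin d) =>
      ‖v‖ ^ 2 * (C * Real.exp (-‖v - uf‖ ^ 2 / (2 * Tf)) - f v))
      = fun v => ‖v‖ ^ 2 * (C * Real.exp (-‖v - uf‖ ^ 2 / (2 * Tf))) - ‖v‖ ^ 2 * f v := by
    funext v; ring
  calc ∫ v : EuclideanSpace ℝ (Fin d),
      ‖v‖ ^ 2 * (C * Real.exp (-‖v - uf‖ ^ 2 / (2 * Tf)) - f v)
      = (∫ v : EuclideanSpace ℝ (Fin d), ‖v‖ ^ 2 * (C * Real.exp (-‖v - uf‖ ^ 2 / (2 * Tf))))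
        - ∫ v : EuclideanSpace ℝ (Fin d), ‖v‖ ^ 2 * f v := by
        rw [hsplit]
        exact integral_sub hM2_int hf_mom2
    _ = 0 := by rw [hM2_val, hfval]; ring
end

section
/- Interpolation property of the full interpolatory tangent projection: let X ∈ ℝ^{n×r} and V ∈ ℝ^{m×r}, with index sets I (rows) and J (columns) of size r such that X(I,:) and V(J,:) are invertible. For H ∈ ℝ^{n×m} define P(H) = H(:,J) V(J,:)^{-T} V^T − X X(I,:)^{-1} H(I,J) V(J,:)^{-T} V^T + X X(I,:)^{-1} H(I,:). Then P(H)(I,:) = H(I,:) and P(H)(:,J) = H(:,J). -/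
/-!
Write `A = X(I,:)⁻¹` and `B = V(J,:)⁻ᵀ`. The rows `I` of `X A` form the identity, and so do the
columns `J` of `B Vᵀ`. Restricting `P(H)` to the rows `I` therefore turns its second term into
a copy of the first, leaving the third, `H(I,:)`; restricting it to the columns `J` turns the
second term into a copy of the third, leaving the first, `H(:,J)`.
-/

open Matrix

theorem submatrix_rows_mul {ι κ ν α R : Type*} [Fintype κ] [Mul R] [AddCommMonoid R]
    (M : Matrix ι κ R) (N : Matrix κ ν R) (I : α → ι) :
    (M * N).submatrix I id = M.submatrix I id * N := by
  simpa using submatrix_mul M N I id id Function.bijective_id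

theorem submatrix_cols_mul {ι κ ν β R : Type*} [Fintype κ] [Mul R] [AddCommMonoid R]
    (M : Matrix ι κ R) (N : Matrix κ ν R) (J : β → ν) :
    (M * N).submatrix id J = M * N.submatrix id J := by
  simpa using submatrix_mul M N id id J Function.bijective_id

section Interpolation

variable {ι κ ρ R : Type*} [Fintype ρ] [DecidableEq ρ] [CommRing R]

theorem submatrix_rows_mul_inv_submatrix_mul (X : Matrix ι ρ R) (I : ρ → ι)
    (hX : IsUnit (X.submatrix I id)) (M : Matrix ρ κ R) :
    (X * ((X.submatrix I id)⁻¹ * M)).submatrix I id = M := by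
  rw [submatrix_rows_mul, mul_nonsing_inv_cancel_left _ _ ((isUnit_iff_isUnit_det _).mp hX)]

theorem submatrix_cols_mul_inv_transpose_mul_transpose (V : Matrix κ ρ R) (J : ρ → κ)
    (hV : IsUnit (V.submatrix J id)) (M : Matrix ι ρ R) :
    (M * ((V.submatrix J id)⁻¹)ᵀ * Vᵀ).submatrix id J = M := by
  have h := congrArg transpose (submatrix_rows_mul_inv_submatrix_mul V J hV Mᵀ)
  simpa [transpose_mul, Matrix.mul_assoc] using h

end Interpolation

theorem full_interpolatory_projection_interpolates_general
    (n m r : ℕ)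
    (X : Matrix (Fin n) (Fin r) ℝ) (V : Matrix (Fin m) (Fin r) ℝ)
    (I : Fin r → Fin n) (J : Fin r → Fin m)
    (hXI : IsUnit (X.submatrix I id)) (hVJ : IsUnit (V.submatrix J id))
    (H : Matrix (Fin n) (Fin m) ℝ)
    (PH : Matrix (Fin n) (Fin m) ℝ)
    (hPH : PH = H.submatrix id J * ((V.submatrix J id)⁻¹)ᵀ * Vᵀ
        - X * (X.submatrix I id)⁻¹ * H.submatrix I J * ((V.submatrix J id)⁻¹)ᵀ * Vᵀ
        + X * (X.submatrix I id)⁻¹ * H.submatrix I id) :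
    PH.submatrix I id = H.submatrix I id ∧ PH.submatrix id J = H.submatrix id J := by
  subst hPH
  constructor
  · simp only [submatrix_add, submatrix_sub, Pi.add_apply, Pi.sub_apply, Matrix.mul_assoc,
      submatrix_rows_mul, submatrix_rows_mul_inv_submatrix_mul X I hXI, submatrix_submatrix,
      Function.id_comp, Function.comp_id, sub_self, zero_add]
  · simp only [submatrix_add, submatrix_sub, Pi.add_apply, Pi.sub_apply,
      submatrix_cols_mul_inv_transpose_mul_transpose V J hVJ, submatrix_cols_mul,
      submatrix_submatrix, Function.id_comp, Function.comp_id, sub_add_cancel]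

/-- Interpolation property of the full interpolatory tangent projection:
    P(H)(I,:) = H(I,:) and P(H)(:,J) = H(:,J). -/
theorem full_interpolatory_projection_interpolates
    (n m r : ℕ) (hr : 1 ≤ r) (hn : r ≤ n) (hm : r ≤ m)
    (X : Matrix (Fin n) (Fin r) ℝ) (V : Matrix (Fin m) (Fin r) ℝ)
    (I : Fin r → Fin n) (J : Fin r → Fin m)
    (hI : Function.Injective I) (hJ : Function.Injective J)
    (hXI : IsUnit (X.submatrix I id)) (hVJ : IsUnit (V.submatrix J id))
    (H : Matrix (Fin n) (Fin m) ℝ)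
    (PH : Matrix (Fin n) (Fin m) ℝ)
    (hPH : PH = H.submatrix id J * ((V.submatrix J id)⁻¹)ᵀ * Vᵀ
        - X * (X.submatrix I id)⁻¹ * H.submatrix I J * ((V.submatrix J id)⁻¹)ᵀ * Vᵀ
        + X * (X.submatrix I id)⁻¹ * H.submatrix I id) :
    PH.submatrix I id = H.submatrix I id ∧ PH.submatrix id J = H.submatrix id J :=
  full_interpolatory_projection_interpolates_general n m r X V I J hXI hVJ H PH hPH
end

section
/- The full interpolatory tangent projection is idempotent: with the same setup (X(I,:) and V(J,:) invertible), the linear map P(H) = H(:,J) V(J,:)^{-T} V^T − X X(I,:)^{-1} H(I,J) V(J,:)^{-T} V^T + X X(I,:)^{-1} H(I,:) satisfies P(P(H)) = P(H) for all H ∈ ℝ^{n×m}. -/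
/-!
Write `P H = H(:,J) W − K H(I,J) W + K H(I,:)` with `K = X X(I,:)⁻¹` and `W = V(J,:)⁻ᵀ Vᵀ`.
Since `K(I,:) = 1` and `W(:,J) = 1`, `P H` agrees with `H` on the rows `I` and on the columns `J`;
as `P H` depends on `H` only through those rows and columns, `P (P H) = P H`.
-/

open Matrix

namespace Matrix

variable {R n m r ι κ : Type*}

theorem submatrix_mul_rows [Fintype r] [Mul R] [AddCommMonoid R]
    (A : Matrix n r R) (B : Matrix r m R) (e : ι → n) :
    (A * B).submatrix e id = A.submatrix e id * B := rfl

theorem submatrix_mul_cols [Fintype r] [Mul R] [AddCommMonoid R]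
    (A : Matrix n r R) (B : Matrix r m R) (e : κ → m) :
    (A * B).submatrix id e = A * B.submatrix id e := rfl

theorem mul_inv_submatrix_rows_eq_one [Fintype r] [DecidableEq r] [CommRing R]
    {X : Matrix n r R} {I : r → n} (hXI : IsUnit (X.submatrix I id)) :
    (X * (X.submatrix I id)⁻¹).submatrix I id = 1 := by
  rw [submatrix_mul_rows, mul_nonsing_inv _ ((isUnit_iff_isUnit_det _).mp hXI)]

/-- The interpolatory projection of the paper is the case `K = X X(I,:)⁻¹`, `W = (V V(J,:)⁻¹)ᵀ`. -/
def interpolatoryProj [Fintype r] [Mul R] [AddCommGroup R] (K : Matrix n r R) (W : Matrix r m R)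
    (I : r → n) (J : r → m) (H : Matrix n m R) : Matrix n m R :=
  H.submatrix id J * W - K * H.submatrix I J * W + K * H.submatrix I id

section InterpolatoryProj

variable [Fintype r] [NonAssocRing R] {K : Matrix n r R} {W : Matrix r m R}
  {I : r → n} {J : r → m}

theorem interpolatoryProj_congr {H H' : Matrix n m R}
    (hrows : H.submatrix I id = H'.submatrix I id) (hcols : H.submatrix id J = H'.submatrix id J) :
    interpolatoryProj K W I J H = interpolatoryProj K W I J H' := by
  have hcross : H.submatrix I J = H'.submatrix I J := by
    simpa only [submatrix_submatrix, Function.comp_id, Function.id_comp] using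
      congrArg (submatrix · id J) hrows
  rw [interpolatoryProj, interpolatoryProj, hrows, hcols, hcross]

variable [DecidableEq r]

theorem interpolatoryProj_submatrix_rows (hK : K.submatrix I id = 1) (H : Matrix n m R) :
    (interpolatoryProj K W I J H).submatrix I id = H.submatrix I id := by
  simp only [interpolatoryProj, submatrix_add, submatrix_sub, Pi.add_apply, Pi.sub_apply,
    submatrix_mul_rows, hK, Matrix.one_mul, submatrix_submatrix, Function.id_comp,
    Function.comp_id, sub_self, zero_add]

theorem interpolatoryProj_submatrix_cols (hW : W.submatrix id J = 1) (H : Matrix n m R) :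
    (interpolatoryProj K W I J H).submatrix id J = H.submatrix id J := by
  simp only [interpolatoryProj, submatrix_add, submatrix_sub, Pi.add_apply, Pi.sub_apply,
    submatrix_mul_cols, hW, Matrix.mul_one, submatrix_submatrix, Function.id_comp,
    Function.comp_id, sub_add_cancel]

theorem interpolatoryProj_idempotent (hK : K.submatrix I id = 1) (hW : W.submatrix id J = 1)
    (H : Matrix n m R) :
    interpolatoryProj K W I J (interpolatoryProj K W I J H) = interpolatoryProj K W I J H :=
  interpolatoryProj_congr (interpolatoryProj_submatrix_rows hK H)
    (interpolatoryProj_submatrix_cols hW H)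

end InterpolatoryProj

end Matrix

theorem full_interpolatory_projection_idempotent_general
    (n m r : ℕ)
    (X : Matrix (Fin n) (Fin r) ℝ) (V : Matrix (Fin m) (Fin r) ℝ)
    (I : Fin r → Fin n) (J : Fin r → Fin m)
    (hXI : IsUnit (X.submatrix I id)) (hVJ : IsUnit (V.submatrix J id))
    (P : Matrix (Fin n) (Fin m) ℝ → Matrix (Fin n) (Fin m) ℝ)
    (hP : ∀ H, P H = H.submatrix id J * ((V.submatrix J id)⁻¹)ᵀ * Vᵀ
        - X * (X.submatrix I id)⁻¹ * H.submatrix I J * ((V.submatrix J id)⁻¹)ᵀ * Vᵀ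
        + X * (X.submatrix I id)⁻¹ * H.submatrix I id) :
    ∀ H, P (P H) = P H := by
  have hP_eq :
      P = interpolatoryProj (X * (X.submatrix I id)⁻¹) (V * (V.submatrix J id)⁻¹)ᵀ I J := by
    funext H
    simp only [hP, interpolatoryProj, transpose_mul, Matrix.mul_assoc]
  have hW : ((V * (V.submatrix J id)⁻¹)ᵀ).submatrix id J = 1 := by
    rw [← transpose_submatrix, mul_inv_submatrix_rows_eq_one hVJ, transpose_one]
  intro H
  rw [hP_eq]
  exact interpolatoryProj_idempotent (mul_inv_submatrix_rows_eq_one hXI) hW H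

/-- The full interpolatory tangent projection is idempotent: P(P(H)) = P(H). -/
theorem full_interpolatory_projection_idempotent
    (n m r : ℕ) (hr : 1 ≤ r) (hn : r ≤ n) (hm : r ≤ m)
    (X : Matrix (Fin n) (Fin r) ℝ) (V : Matrix (Fin m) (Fin r) ℝ)
    (I : Fin r → Fin n) (J : Fin r → Fin m)
    (hI : Function.Injective I) (hJ : Function.Injective J)
    (hXI : IsUnit (X.submatrix I id)) (hVJ : IsUnit (V.submatrix J id))
    (P : Matrix (Fin n) (Fin m) ℝ → Matrix (Fin n) (Fin m) ℝ)
    (hP : ∀ H, P H = H.submatrix id J * ((V.submatrix J id)⁻¹)ᵀ * Vᵀ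
        - X * (X.submatrix I id)⁻¹ * H.submatrix I J * ((V.submatrix J id)⁻¹)ᵀ * Vᵀ
        + X * (X.submatrix I id)⁻¹ * H.submatrix I id) :
    ∀ H, P (P H) = P H :=
  full_interpolatory_projection_idempotent_general n m r X V I J hXI hVJ P hP
end

section
/- Exactness of the interpolatory projection on rank-r matrices: if F = X S V^T with S ∈ ℝ^{r×r}, X ∈ ℝ^{n×r}, V ∈ ℝ^{m×r}, and I, J are index sets of size r with X(I,:) and V(J,:) invertible, then the interpolatory projection P (defined as P(H) = H(:,J)V(J,:)^{-T}V^T − X X(I,:)^{-1}H(I,J)V(J,:)^{-T}V^T + X X(I,:)^{-1}H(I,:)) satisfies P(F) = F. -/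
open Matrix

/-
If `F = X S Vᵀ`, then `F` is reproduced both from its columns `J`, as `F(:,J) V(J,:)⁻ᵀ Vᵀ`, and
from its rows `I`, as `X X(I,:)⁻¹ F(I,:)`. Applying the first identity to `F(I,:) = X(I,:) S Vᵀ`
shows that the middle term of the projection equals `X X(I,:)⁻¹ F(I,:)`, so `P(F) = F - F + F`.
-/

namespace Matrix

variable {R m n r k : Type*} [CommRing R] [Fintype r] [DecidableEq r]

theorem submatrix_id_mul_inv_transpose_mul_transpose [Fintype m]
    {V : Matrix m r R} {J : r → m} (hVJ : IsUnit (V.submatrix J id))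
    {Y : Matrix n r R} {F : Matrix n m R} (hF : F = Y * Vᵀ) :
    F.submatrix id J * ((V.submatrix J id)⁻¹)ᵀ * Vᵀ = F := by
  have hcols : F.submatrix id J = Y * (V.submatrix J id)ᵀ := by
    rw [hF, submatrix_mul _ _ _ id _ Function.bijective_id, submatrix_id_id, transpose_submatrix]
  have hinv : (V.submatrix J id)ᵀ * ((V.submatrix J id)⁻¹)ᵀ = 1 := by
    rw [← transpose_mul, nonsing_inv_mul _ ((isUnit_iff_isUnit_det _).mp hVJ), transpose_one]
  rw [hcols, Matrix.mul_assoc Y, hinv, Matrix.mul_one, hF]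

theorem mul_inv_mul_submatrix_id [Fintype n]
    {X : Matrix n r R} {I : r → n} (hXI : IsUnit (X.submatrix I id))
    {Z : Matrix r m R} {F : Matrix n m R} (hF : F = X * Z) :
    X * (X.submatrix I id)⁻¹ * F.submatrix I id = F := by
  have hrows : F.submatrix I id = X.submatrix I id * Z := by
    rw [hF, submatrix_mul _ _ _ id _ Function.bijective_id, submatrix_id_id]
  rw [hrows, Matrix.mul_assoc X, ← Matrix.mul_assoc _ (X.submatrix I id),
    nonsing_inv_mul _ ((isUnit_iff_isUnit_det _).mp hXI), Matrix.one_mul, hF]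

end Matrix

theorem full_interpolatory_projection_exact_general
    (n m r : ℕ)
    (X : Matrix (Fin n) (Fin r) ℝ) (V : Matrix (Fin m) (Fin r) ℝ)
    (S : Matrix (Fin r) (Fin r) ℝ)
    (I : Fin r → Fin n) (J : Fin r → Fin m)
    (hXI : IsUnit (X.submatrix I id)) (hVJ : IsUnit (V.submatrix J id))
    (F : Matrix (Fin n) (Fin m) ℝ) (hF : F = X * S * Vᵀ) :
    F.submatrix id J * ((V.submatrix J id)⁻¹)ᵀ * Vᵀ
        - X * (X.submatrix I id)⁻¹ * F.submatrix I J * ((V.submatrix J id)⁻¹)ᵀ * Vᵀ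
        + X * (X.submatrix I id)⁻¹ * F.submatrix I id
      = F := by
  have hrows : F.submatrix I id = X.submatrix I id * S * Vᵀ := by
    rw [hF, submatrix_mul _ _ _ id _ Function.bijective_id, submatrix_id_id,
      submatrix_mul _ _ _ id _ Function.bijective_id, submatrix_id_id]
  have hcross : F.submatrix I J * ((V.submatrix J id)⁻¹)ᵀ * Vᵀ = F.submatrix I id :=
    submatrix_id_mul_inv_transpose_mul_transpose hVJ hrows
  have hrecon : X * (X.submatrix I id)⁻¹ * F.submatrix I id = F :=
    mul_inv_mul_submatrix_id hXI (hF.trans (Matrix.mul_assoc _ _ _))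
  rw [Matrix.mul_assoc _ (F.submatrix I J), Matrix.mul_assoc _ (F.submatrix I J * _), hcross,
    hrecon, submatrix_id_mul_inv_transpose_mul_transpose hVJ hF, sub_self, zero_add]

/-- Exactness of the interpolatory projection on rank-r matrices: if F = X S Vᵀ then P(F) = F. -/
theorem full_interpolatory_projection_exact
    (n m r : ℕ) (hr : 1 ≤ r) (hn : r ≤ n) (hm : r ≤ m)
    (X : Matrix (Fin n) (Fin r) ℝ) (V : Matrix (Fin m) (Fin r) ℝ)
    (S : Matrix (Fin r) (Fin r) ℝ)
    (I : Fin r → Fin n) (J : Fin r → Fin m)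
    (hI : Function.Injective I) (hJ : Function.Injective J)
    (hXI : IsUnit (X.submatrix I id)) (hVJ : IsUnit (V.submatrix J id))
    (F : Matrix (Fin n) (Fin m) ℝ) (hF : F = X * S * Vᵀ) :
    F.submatrix id J * ((V.submatrix J id)⁻¹)ᵀ * Vᵀ
        - X * (X.submatrix I id)⁻¹ * F.submatrix I J * ((V.submatrix J id)⁻¹)ᵀ * Vᵀ
        + X * (X.submatrix I id)⁻¹ * F.submatrix I id
      = F :=
  full_interpolatory_projection_exact_general n m r X V S I J hXI hVJ F hF
end
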